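/- If w is a 321-avoiding permutation, then no rc-graph R for w has a line containing both a cross traversed vertically and a cross traversed horizontally. Conversely, if w contains the pattern 321, then every rc-graph for w has such a line. -/

import Mathlib

/-- The adjacent transposition `s_a = (a, a+1)`, as a permutation of `ℕ` (we use the
letters `1, …, n-1`, permutations act on `{1, …, n}`). -/
def sTrans (a : ℕ) : Equiv.Perm ℕ := Equiv.swap a (a + 1)

/-- The product `s_{a_1} s_{a_2} ⋯` of a word. -/
def wordProd (L : List ℕ) : Equiv.Perm ℕ := (L.map sTrans).prod

/-- `L` is a reduced word for `w`: a word in the letters `a ≥ 1` whose product of adjacent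
transpositions is `w`, of minimal possible length. -/
def IsReducedWordFor (w : Equiv.Perm ℕ) (L : List ℕ) : Prop :=
  (∀ a ∈ L, 1 ≤ a) ∧ wordProd L = w ∧
    ∀ M : List ℕ, (∀ a ∈ M, 1 ≤ a) → wordProd M = w → L.length ≤ M.length

/-- `w` is a permutation of `{1, …, n}`: it fixes everything outside this interval. -/
def IsPermOn (n : ℕ) (w : Equiv.Perm ℕ) : Prop :=
  ∀ i : ℕ, w i ≠ i → 1 ≤ i ∧ i ≤ n

/-- The strict linear order on crosses: `(i,j) < (i',j')` iff `i < i'`, or `i = i'` and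
`j > j'`. -/
def rcLT (p q : ℕ × ℕ) : Prop := p.1 < q.1 ∨ (p.1 = q.1 ∧ q.2 < p.2)

/-- `L` is the listing of the finite set `R` in increasing `rcLT`-order. -/
def IsRCReading (R : Finset (ℕ × ℕ)) (L : List (ℕ × ℕ)) : Prop :=
  L.toFinset = R ∧ L.Chain' rcLT

/-- The word `a_1 a_2 ⋯` with `a_k = i_k + j_k - 1` read off a listing of crosses. -/
def rcWord (L : List (ℕ × ℕ)) : List ℕ := L.map (fun p => p.1 + p.2 - 1)

/-- `R` is an rc-graph for `w ∈ Sₙ`: a subset of `{(i,j) : i,j ≥ 1, i+j ≤ n}` whose reading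
word (in the prescribed linear order) is a reduced word for `w`. -/
def IsRCGraph (n : ℕ) (w : Equiv.Perm ℕ) (R : Finset (ℕ × ℕ)) : Prop :=
  (∀ p ∈ R, 1 ≤ p.1 ∧ 1 ≤ p.2 ∧ p.1 + p.2 ≤ n) ∧
    ∀ L : List (ℕ × ℕ), IsRCReading R L → IsReducedWordFor w (rcWord L)

/-- The code of `w`: `c_i = #{ j : j > i ∧ w_j < w_i }`. -/
def permCode (n : ℕ) (w : Equiv.Perm ℕ) (i : ℕ) : ℕ :=
  ((Finset.Icc 1 n).filter (fun j => i < j ∧ w j < w i)).card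

/-- The bottom rc-graph `R_bot(w) = { (i,j) : 1 ≤ j ≤ c_i(w) }`. -/
def Rbot (n : ℕ) (w : Equiv.Perm ℕ) : Finset (ℕ × ℕ) :=
  ((Finset.Icc 1 n) ×ˢ (Finset.Icc 1 n)).filter (fun p => p.2 ≤ permCode n w p.1)

/-- `w` contains the pattern 321: there are `i < j < k` with `w_i > w_j > w_k`. -/
def Has321 (w : Equiv.Perm ℕ) : Prop :=
  ∃ i j k : ℕ, 1 ≤ i ∧ i < j ∧ j < k ∧ w k < w j ∧ w j < w i

/-- One step of a strand travelling through the wiring diagram of `R`.  A state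
`(i, j, d)` means the strand is entering cell `(i,j)`, from the left if `d = true`
(horizontally) and from below if `d = false` (vertically).  At a cross (`(i,j) ∈ R`) the
strand goes straight through; at an avoidance it turns (left→top, bottom→right).
Lines travel up and to the right, so it next enters `(i, j+1)` from the left or
`(i-1, j)` from below. -/
def rcStep (R : Finset (ℕ × ℕ)) (s : ℕ × ℕ × Bool) : ℕ × ℕ × Bool :=
  if decide ((s.1, s.2.1) ∈ R) = s.2.2 then (s.1, s.2.1 + 1, true)
  else (s.1 - 1, s.2.1, false)

/-- Line `k` (starting at position `(k,1)`, entering from the left) traverses the cross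
`(i,j)` of `R` horizontally. -/
def TraversesH (R : Finset (ℕ × ℕ)) (k i j : ℕ) : Prop :=
  (i, j) ∈ R ∧ ∃ m : ℕ, (rcStep R)^[m] (k, 1, true) = (i, j, true)

/-- Line `k` traverses the cross `(i,j)` of `R` vertically. -/
def TraversesV (R : Finset (ℕ × ℕ)) (k i j : ℕ) : Prop :=
  (i, j) ∈ R ∧ ∃ m : ℕ, (rcStep R)^[m] (k, 1, true) = (i, j, false)



lemma sTrans_left (a : ℕ) : sTrans a a = a + 1 := Equiv.swap_apply_left _ _
lemma sTrans_right (a : ℕ) : sTrans a (a+1) = a := Equiv.swap_apply_right _ _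
lemma sTrans_other {a x : ℕ} (h1 : x ≠ a) (h2 : x ≠ a+1) : sTrans a x = x :=
  Equiv.swap_apply_of_ne_of_ne h1 h2

lemma sTrans_apply (a x : ℕ) : sTrans a x = if x = a then a + 1 else if x = a + 1 then a else x :=
  Equiv.swap_apply_def _ _ _

lemma sTrans_invol (a x : ℕ) : sTrans a (sTrans a x) = x := by
  unfold sTrans
  rw [Equiv.swap_apply_self]

lemma sTrans_mem_Icc {N a x : ℕ} (ha : 1 ≤ a) (haN : a + 1 ≤ N) (hx : x ∈ Finset.Icc 1 N) :
    sTrans a x ∈ Finset.Icc 1 N := by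
  simp only [Finset.mem_Icc] at *
  rw [sTrans_apply]
  split_ifs <;> omega

lemma sTrans_lt {a x y : ℕ} (ha : 1 ≤ a) (hxy : x < y) (hne : (x, y) ≠ (a, a+1)) :
    sTrans a x < sTrans a y := by
  have hne' : ¬ (x = a ∧ y = a + 1) := by
    rintro ⟨rfl, rfl⟩; exact hne rfl
  rw [sTrans_apply, sTrans_apply]
  split_ifs <;> omega

lemma wordProd_nil : wordProd [] = 1 := rfl

lemma wordProd_append (X Y : List ℕ) : wordProd (X ++ Y) = wordProd X * wordProd Y := by
  simp [wordProd]

lemma wordProd_concat (X : List ℕ) (a : ℕ) : wordProd (X ++ [a]) = wordProd X * sTrans a := by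
  rw [wordProd_append]; simp [wordProd]

lemma permOn_one (N : ℕ) : IsPermOn N 1 := by
  intro i hi; simp at hi

lemma permOn_mul {N : ℕ} {u v : Equiv.Perm ℕ} (hu : IsPermOn N u) (hv : IsPermOn N v) :
    IsPermOn N (u * v) := by
  intro i hi
  rcases eq_or_ne (v i) i with h | h
  · exact hu i (by rwa [Equiv.Perm.mul_apply, h] at hi)
  · exact hv i h

lemma permOn_sTrans {N a : ℕ} (ha : 1 ≤ a) (haN : a + 1 ≤ N) : IsPermOn N (sTrans a) := by
  intro i hi
  rcases eq_or_ne i a with rfl | h1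
  · omega
  rcases eq_or_ne i (a+1) with rfl | h2
  · omega
  · exact absurd (sTrans_other h1 h2) hi

lemma permOn_wordProd {N : ℕ} {M : List ℕ} (h : ∀ b ∈ M, 1 ≤ b ∧ b + 1 ≤ N) :
    IsPermOn N (wordProd M) := by
  induction M with
  | nil => exact permOn_one N
  | cons b M ih =>
    have : wordProd (b :: M) = sTrans b * wordProd M := by simp [wordProd]
    rw [this]
    exact permOn_mul (permOn_sTrans (h b (by simp)).1 (h b (by simp)).2)
      (ih fun c hc => h c (by simp [hc]))

lemma permOn_mem_Icc {N : ℕ} {u : Equiv.Perm ℕ} (hu : IsPermOn N u) {x : ℕ}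
    (hx : x ∈ Finset.Icc 1 N) : u x ∈ Finset.Icc 1 N := by
  by_contra h
  have h1 : u (u x) = u x := by
    by_contra h2
    have := hu (u x) h2
    simp only [Finset.mem_Icc] at h
    omega
  have := u.injective h1
  rw [this] at h
  exact h hx

/-- number of inversions inside the box `[1,N]²` -/
def invN (N : ℕ) (u : Equiv.Perm ℕ) : ℕ :=
  (((Finset.Icc 1 N) ×ˢ (Finset.Icc 1 N)).filter (fun p => p.1 < p.2 ∧ u p.2 < u p.1)).card

lemma invN_one (N : ℕ) : invN N 1 = 0 := by
  unfold invN
  rw [Finset.card_eq_zero, Finset.filter_eq_empty_iff]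
  rintro p -
  simp only [Equiv.Perm.one_apply]
  omega

/-- membership transfer under right multiplication by `sTrans a` -/
lemma inv_transfer {N a : ℕ} (ha : 1 ≤ a) (haN : a + 1 ≤ N) (u : Equiv.Perm ℕ)
    {p : ℕ × ℕ}
    (hp : p ∈ (((Finset.Icc 1 N) ×ˢ (Finset.Icc 1 N)).filter
      (fun p => p.1 < p.2 ∧ (u * sTrans a) p.2 < (u * sTrans a) p.1)))
    (hne : p ≠ (a, a+1)) :
    (sTrans a p.1, sTrans a p.2) ∈ (((Finset.Icc 1 N) ×ˢ (Finset.Icc 1 N)).filter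
      (fun p => p.1 < p.2 ∧ u p.2 < u p.1)) := by
  simp only [Finset.mem_filter, Finset.mem_product] at hp ⊢
  obtain ⟨⟨hp1, hp2⟩, hlt, hinv⟩ := hp
  refine ⟨⟨sTrans_mem_Icc ha haN hp1, sTrans_mem_Icc ha haN hp2⟩, ?_, ?_⟩
  · exact sTrans_lt ha hlt (by rcases p with ⟨x, y⟩; exact hne)
  · simpa [Equiv.Perm.mul_apply] using hinv

lemma invN_mul_le (N a : ℕ) (ha : 1 ≤ a) (haN : a + 1 ≤ N) (u : Equiv.Perm ℕ) :
    invN N (u * sTrans a) ≤ invN N u + 1 := by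
  classical
  unfold invN
  set A := (((Finset.Icc 1 N) ×ˢ (Finset.Icc 1 N)).filter
      (fun p => p.1 < p.2 ∧ (u * sTrans a) p.2 < (u * sTrans a) p.1)) with hA
  set B := (((Finset.Icc 1 N) ×ˢ (Finset.Icc 1 N)).filter
      (fun p => p.1 < p.2 ∧ u p.2 < u p.1)) with hB
  have hinj : Set.InjOn (fun p : ℕ × ℕ => (sTrans a p.1, sTrans a p.2)) (A.erase (a, a+1)) := by
    intro p _ q _ h
    simp only [Prod.mk.injEq] at h
    exact Prod.ext ((sTrans a).injective h.1) ((sTrans a).injective h.2)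
  have hmaps : ∀ p ∈ A.erase (a, a+1), (sTrans a p.1, sTrans a p.2) ∈ B := by
    intro p hp
    rw [Finset.mem_erase] at hp
    exact inv_transfer ha haN u hp.2 hp.1
  have h1 : (A.erase (a, a+1)).card ≤ B.card := Finset.card_le_card_of_injOn _ hmaps hinj
  have h2 : A.card ≤ (A.erase (a, a+1)).card + 1 := by
    by_cases h : (a, a+1) ∈ A
    · rw [Finset.card_erase_of_mem h]; omega
    · rw [Finset.erase_eq_of_notMem h]; omega
  calc A.card ≤ (A.erase (a,a+1)).card + 1 := h2
    _ ≤ B.card + 1 := by omega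

lemma invN_mul_descent (N a : ℕ) (ha : 1 ≤ a) (haN : a + 1 ≤ N) (u : Equiv.Perm ℕ)
    (hd : u (a+1) < u a) : invN N (u * sTrans a) + 1 ≤ invN N u := by
  classical
  unfold invN
  set A := (((Finset.Icc 1 N) ×ˢ (Finset.Icc 1 N)).filter
      (fun p => p.1 < p.2 ∧ (u * sTrans a) p.2 < (u * sTrans a) p.1)) with hA
  set B := (((Finset.Icc 1 N) ×ˢ (Finset.Icc 1 N)).filter
      (fun p => p.1 < p.2 ∧ u p.2 < u p.1)) with hB
  have hmemB : (a, a+1) ∈ B := by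
    simp only [hB, Finset.mem_filter, Finset.mem_product, Finset.mem_Icc]
    exact ⟨⟨⟨ha, by omega⟩, ⟨by omega, haN⟩⟩, by omega, hd⟩
  have hnotA : (a, a+1) ∉ A := by
    intro hmem
    rw [hA, Finset.mem_filter] at hmem
    obtain ⟨-, -, hinv⟩ := hmem
    simp only [Equiv.Perm.mul_apply] at hinv
    rw [sTrans_left, sTrans_right] at hinv
    omega
  have hmaps : ∀ p ∈ A, (sTrans a p.1, sTrans a p.2) ∈ B.erase (a, a+1) := by
    intro p hp
    have hne : p ≠ (a, a+1) := fun h => hnotA (h ▸ hp)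
    rw [Finset.mem_erase]
    refine ⟨?_, inv_transfer ha haN u hp hne⟩
    intro h
    simp only [Prod.mk.injEq] at h
    have h1 : p.1 = a + 1 := (sTrans a).injective (by rw [h.1, sTrans_right])
    have h2 : p.2 = a := (sTrans a).injective (by rw [h.2, sTrans_left])
    simp only [hA, Finset.mem_filter] at hp
    omega
  have hinj : Set.InjOn (fun p : ℕ × ℕ => (sTrans a p.1, sTrans a p.2)) A := by
    intro p _ q _ h
    simp only [Prod.mk.injEq] at h
    exact Prod.ext ((sTrans a).injective h.1) ((sTrans a).injective h.2)
  have h1 : A.card ≤ (B.erase (a, a+1)).card := Finset.card_le_card_of_injOn _ hmaps hinj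
  rw [Finset.card_erase_of_mem hmemB] at h1
  have := Finset.card_pos.mpr ⟨_, hmemB⟩
  omega

lemma invN_box {N N' : ℕ} {u : Equiv.Perm ℕ} (hu : IsPermOn N u) (h : N ≤ N') :
    invN N' u = invN N u := by
  unfold invN
  congr 1
  apply Finset.ext
  intro p
  simp only [Finset.mem_filter, Finset.mem_product, Finset.mem_Icc]
  constructor
  · rintro ⟨⟨h1, h2⟩, hlt, hinv⟩
    have hp1N : p.1 ≤ N := by
      by_contra hc
      have e1 : u p.1 = p.1 := by
        by_contra hc2; have := hu p.1 hc2; omega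
      have e2 : u p.2 = p.2 := by
        by_contra hc2; have := hu p.2 hc2; omega
      omega
    have hup1 : u p.1 ≤ N := by
      have := permOn_mem_Icc hu (Finset.mem_Icc.mpr ⟨h1.1, hp1N⟩)
      simp only [Finset.mem_Icc] at this; omega
    have hp2N : p.2 ≤ N := by
      by_contra hc
      have e2 : u p.2 = p.2 := by
        by_contra hc2; have := hu p.2 hc2; omega
      omega
    exact ⟨⟨⟨h1.1, hp1N⟩, h2.1, hp2N⟩, hlt, hinv⟩
  · rintro ⟨⟨h1, h2⟩, hlt, hinv⟩
    exact ⟨⟨⟨h1.1, by omega⟩, h2.1, by omega⟩, hlt, hinv⟩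

lemma eq_one_of_invN_zero {N : ℕ} {u : Equiv.Perm ℕ} (hu : IsPermOn N u)
    (h : invN N u = 0) : u = 1 := by
  have hni : ∀ x y, 1 ≤ x → y ≤ N → x < y → ¬ (u y < u x) := by
    intro x y hx hy hxy hc
    have : (x, y) ∈ (((Finset.Icc 1 N) ×ˢ (Finset.Icc 1 N)).filter
        (fun p => p.1 < p.2 ∧ u p.2 < u p.1)) := by
      simp only [Finset.mem_filter, Finset.mem_product, Finset.mem_Icc]
      exact ⟨⟨⟨hx, by omega⟩, by omega, hy⟩, hxy, hc⟩
    unfold invN at h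
    rw [Finset.card_eq_zero] at h
    rw [h] at this
    exact absurd this (Finset.notMem_empty _)
  have key : ∀ x, x ≤ N → 1 ≤ x → u x = x := by
    intro x
    induction x using Nat.strong_induction_on with
    | _ x ih =>
      intro hxN hx1
      have hux : u x ∈ Finset.Icc 1 N := permOn_mem_Icc hu (Finset.mem_Icc.mpr ⟨hx1, hxN⟩)
      simp only [Finset.mem_Icc] at hux
      rcases lt_trichotomy (u x) x with hlt | heq | hgt
      · -- u x < x, so u x is fixed by ih, contradiction with injectivity
        have hfix : u (u x) = u x := ih (u x) hlt (by omega) hux.1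
        have := u.injective hfix
        omega
      · exact heq
      · -- u x > x : consider y with u y = x
        exfalso
        set y := u.symm x with hy
        have huy : u y = x := u.apply_symm_apply x
        have hyx : y ≠ x := by
          intro hc; rw [hc] at huy; omega
        have hyN : y ∈ Finset.Icc 1 N := by
          by_contra hc
          have : u y = y := by
            by_contra hc2
            have := hu y hc2
            simp only [Finset.mem_Icc] at hc
            omega
          rw [huy] at this
          rw [← this] at hc
          exact hc (Finset.mem_Icc.mpr ⟨hx1, hxN⟩)
        simp only [Finset.mem_Icc] at hyN
        rcases lt_or_gt_of_ne hyx with hlty | hgty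
        · have := ih y hlty (by omega) hyN.1
          rw [this] at huy; omega
        · exact hni x y hx1 hyN.2 hgty (by omega)
  ext x
  simp only [Equiv.Perm.one_apply]
  by_cases hx : 1 ≤ x ∧ x ≤ N
  · exact key x hx.2 hx.1
  · by_contra hc
    have := hu x hc
    omega

lemma exists_descent {N : ℕ} {u : Equiv.Perm ℕ} (hu : IsPermOn N u)
    (h : 0 < invN N u) : ∃ a, 1 ≤ a ∧ a + 1 ≤ N ∧ u (a+1) < u a := by
  by_contra hc
  push_neg at hc
  have mono : ∀ a, 1 ≤ a → a + 1 ≤ N → u a < u (a+1) := by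
    intro a h1 h2
    have := hc a h1 h2
    rcases lt_or_eq_of_le this with h' | h'
    · exact h'
    · exact absurd (u.injective h') (by omega)
  have incr : ∀ x y, 1 ≤ x → y ≤ N → x < y → u x < u y := by
    intro x y hx hy hxy
    induction y with
    | zero => omega
    | succ y ih =>
      rcases eq_or_lt_of_le (Nat.succ_le_of_lt hxy) with h' | h'
      · rw [← h']; exact mono x hx (by omega)
      · exact lt_trans (ih (by omega) (by omega)) (mono y (by omega) hy)
  have : invN N u = 0 := by
    unfold invN
    rw [Finset.card_eq_zero, Finset.filter_eq_empty_iff]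
    intro p hp
    simp only [Finset.mem_product, Finset.mem_Icc] at hp
    rintro ⟨hlt, hinv⟩
    exact absurd (incr p.1 p.2 hp.1.1 hp.2.2 hlt) (by omega)
  omega

lemma exists_word_of_permOn {N : ℕ} (u : Equiv.Perm ℕ) (hu : IsPermOn N u) :
    ∃ M : List ℕ, (∀ a ∈ M, 1 ≤ a) ∧ wordProd M = u ∧ M.length ≤ invN N u := by
  generalize hn : invN N u = n
  induction n using Nat.strong_induction_on generalizing u with
  | _ n ih =>
    rcases Nat.eq_zero_or_pos n with rfl | hpos
    · refine ⟨[], by simp, ?_, by simp⟩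
      rw [wordProd_nil, eq_one_of_invN_zero hu hn]
    · obtain ⟨a, ha1, haN, hd⟩ := exists_descent hu (hn ▸ hpos)
      have hvN : IsPermOn N (u * sTrans a) := permOn_mul hu (permOn_sTrans ha1 haN)
      have hlt : invN N (u * sTrans a) < n := by
        have := invN_mul_descent N a ha1 haN u hd
        omega
      obtain ⟨M, hM1, hM2, hM3⟩ := ih (invN N (u * sTrans a)) hlt (u * sTrans a) hvN rfl
      refine ⟨M ++ [a], ?_, ?_, ?_⟩
      · intro b hb
        rcases List.mem_append.mp hb with h | h
        · exact hM1 b h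
        · simp at h; omega
      · rw [wordProd_concat, hM2, mul_assoc]
        unfold sTrans
        rw [Equiv.swap_mul_self, mul_one]
      · simp only [List.length_append, List.length_singleton]
        have := invN_mul_descent N a ha1 haN u hd
        omega

lemma invN_le_length {N : ℕ} (M : List ℕ) (h : ∀ a ∈ M, 1 ≤ a ∧ a + 1 ≤ N) :
    invN N (wordProd M) ≤ M.length := by
  induction M using List.reverseRecOn with
  | nil => rw [wordProd_nil, invN_one]; simp
  | append_singleton M a ih =>
    rw [wordProd_concat]
    have ha := h a (by simp)
    have h1 := invN_mul_le N a ha.1 ha.2 (wordProd M)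
    have h2 := ih fun b hb => h b (by simp [hb])
    simp only [List.length_append, List.length_singleton]
    omega

lemma le_foldr_max (l : List ℕ) : ∀ b ∈ l, b ≤ l.foldr max 0 := by
  induction l with
  | nil => simp
  | cons c l ih =>
    intro b hb
    rcases List.mem_cons.mp hb with rfl | h
    · simp only [List.foldr_cons]; exact le_max_left _ _
    · simp only [List.foldr_cons]; exact le_trans (ih b h) (le_max_right _ _)

/-- Key consequence of reducedness: the last letter is appended at an ascent. -/
lemma descent_of_reduced {w : Equiv.Perm ℕ} {M : List ℕ} {a : ℕ}
    (h : IsReducedWordFor w (M ++ [a])) : (wordProd M) a < (wordProd M) (a+1) := by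
  obtain ⟨hlet, hprod, hmin⟩ := h
  have hw' : wordProd (M ++ [a]) = wordProd M * sTrans a := wordProd_concat M a
  set N := (M ++ [a]).foldr max 0 + 1 with hN
  have hbound : ∀ b ∈ M ++ [a], 1 ≤ b ∧ b + 1 ≤ N := by
    intro b hb
    exact ⟨hlet b hb, by have := le_foldr_max _ b hb; omega⟩
  have ha1 : 1 ≤ a := hlet a (by simp)
  have haN : a + 1 ≤ N := (hbound a (by simp)).2
  have hMbound : ∀ b ∈ M, 1 ≤ b ∧ b + 1 ≤ N := fun b hb => hbound b (List.mem_append_left _ hb)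
  by_contra hc
  push_neg at hc
  have hne : wordProd M (a+1) ≠ wordProd M a := fun h => by
    have := (wordProd M).injective h; omega
  have hd : wordProd M (a+1) < wordProd M a := lt_of_le_of_ne hc hne
  have hdes := invN_mul_descent N a ha1 haN (wordProd M) hd
  have hlen := invN_le_length (N := N) M hMbound
  have hwN : IsPermOn N w := by rw [← hprod]; exact permOn_wordProd hbound
  obtain ⟨M₀, h1, h2, h3⟩ := exists_word_of_permOn w hwN
  have h4 := hmin M₀ h1 h2
  have h5 : invN N w = invN N (wordProd M * sTrans a) := by rw [← hprod, hw']
  simp only [List.length_append, List.length_singleton] at h4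
  omega

lemma rcLT_trans : Transitive rcLT := by
  rintro ⟨a1, a2⟩ ⟨b1, b2⟩ ⟨c1, c2⟩ h1 h2
  unfold rcLT at *
  simp only at *
  omega

lemma rcLT_irrefl (p : ℕ × ℕ) : ¬ rcLT p p := by
  unfold rcLT; omega

instance : IsTrans (ℕ × ℕ) rcLT := ⟨fun _ _ _ h1 h2 => rcLT_trans h1 h2⟩

lemma reading_decomp {R : Finset (ℕ × ℕ)} {L : List (ℕ × ℕ)} (h : IsRCReading R L)
    (hne : R.Nonempty) :
    ∃ L' p0, L = L' ++ [p0] ∧ p0 ∈ R ∧ (∀ q ∈ R, q ≠ p0 → rcLT q p0) ∧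
      IsRCReading (R.erase p0) L' := by
  obtain ⟨hfin, hch⟩ := h
  rcases List.eq_nil_or_concat L with rfl | ⟨L', p0, rfl⟩
  · simp at hfin
    rw [← hfin] at hne
    exact absurd rfl hne.ne_empty
  rw [List.concat_eq_append] at hfin hch ⊢
  have hpw : List.Pairwise rcLT (L' ++ [p0]) := List.isChain_iff_pairwise.mp hch
  rw [List.pairwise_append] at hpw
  obtain ⟨hpwL, -, hmax⟩ := hpw
  have hmax' : ∀ x ∈ L', rcLT x p0 := fun x hx => hmax x hx p0 (by simp)
  have hp0L : p0 ∉ L' := fun hx => rcLT_irrefl p0 (hmax' p0 hx)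
  have hmemR : ∀ q, q ∈ R ↔ (q ∈ L' ∨ q = p0) := by
    intro q
    rw [← hfin, List.toFinset_append, Finset.mem_union]
    simp
  refine ⟨L', p0, rfl, ?_, ?_, ?_, ?_⟩
  · exact (hmemR p0).mpr (Or.inr rfl)
  · intro q hq hqne
    rcases (hmemR q).mp hq with hq' | rfl
    · exact hmax' q hq'
    · exact absurd rfl hqne
  · apply Finset.ext
    intro q
    rw [Finset.mem_erase, List.mem_toFinset, hmemR q]
    constructor
    · intro hq
      exact ⟨fun hc => hp0L (hc ▸ hq), Or.inl hq⟩
    · rintro ⟨h1, h2 | rfl⟩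
      · exact h2
      · exact absurd rfl h1
  · exact (List.isChain_append.mp hch).1

lemma reading_exists (R : Finset (ℕ × ℕ)) : ∃ L, IsRCReading R L := by
  induction R using Finset.strongInductionOn with
  | _ R ih =>
    rcases R.eq_empty_or_nonempty with rfl | hne
    · exact ⟨[], by simp [IsRCReading], List.isChain_nil⟩
    · have himg : (R.image Prod.fst).Nonempty := hne.image _
      set i0 := (R.image Prod.fst).max' himg with hi0
      have hF : (R.filter (fun p => p.1 = i0)).Nonempty := by
        obtain ⟨q, hq1, hq2⟩ := Finset.mem_image.mp ((R.image Prod.fst).max'_mem himg)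
        exact ⟨q, Finset.mem_filter.mpr ⟨hq1, hq2⟩⟩
      have himg2 : ((R.filter (fun p => p.1 = i0)).image Prod.snd).Nonempty := hF.image _
      set j0 := ((R.filter (fun p => p.1 = i0)).image Prod.snd).min' himg2 with hj0
      have hp0R : (i0, j0) ∈ R := by
        obtain ⟨q, hq1, hq2⟩ := Finset.mem_image.mp
          (Finset.min'_mem _ himg2)
        rw [Finset.mem_filter] at hq1
        have : q = (i0, j0) := by
          rcases q with ⟨q1, q2⟩
          simp only at hq1 hq2
          rw [hq1.2, hq2]
        rw [← this]; exact hq1.1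
      have hmax : ∀ q ∈ R, q ≠ (i0, j0) → rcLT q (i0, j0) := by
        intro q hq hqne
        have hle : q.1 ≤ i0 := Finset.le_max' _ _ (Finset.mem_image_of_mem Prod.fst hq)
        rcases lt_or_eq_of_le hle with hlt | heq
        · exact Or.inl hlt
        · right
          refine ⟨heq, ?_⟩
          have : j0 ≤ q.2 := Finset.min'_le _ _
            (Finset.mem_image_of_mem Prod.snd (Finset.mem_filter.mpr ⟨hq, heq⟩))
          rcases lt_or_eq_of_le this with h' | h'
          · exact h'
          · exfalso; apply hqne
            rcases q with ⟨q1, q2⟩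
            simp only at heq h'
            rw [heq, ← h']
      obtain ⟨L', hL'⟩ := ih (R.erase (i0, j0)) (Finset.erase_ssubset hp0R)
      refine ⟨L' ++ [(i0, j0)], ?_, ?_⟩
      · rw [List.toFinset_append, hL'.1]
        have h1 : ([(i0,j0)] : List (ℕ×ℕ)).toFinset = {(i0,j0)} := by simp
        rw [h1, Finset.union_comm]
        have h2 : {(i0,j0)} ∪ R.erase (i0,j0) = insert (i0,j0) (R.erase (i0,j0)) := by
          ext q; simp [Finset.mem_union, Finset.mem_insert]
        rw [h2, Finset.insert_erase hp0R]
      · show List.IsChain rcLT _; rw [List.isChain_append]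
        refine ⟨hL'.2, List.isChain_singleton _, ?_⟩
        intro x hx y hy
        simp only [List.head?_cons, Option.mem_def, Option.some.injEq] at hy
        obtain ⟨hne', rfl⟩ := List.mem_getLast?_eq_getLast hx
        have hxL : L'.getLast hne' ∈ L' := List.getLast_mem hne'
        have hxR : L'.getLast hne' ∈ R.erase (i0, j0) := by
          rw [← hL'.1]; exact List.mem_toFinset.mpr hxL
        rw [Finset.mem_erase] at hxR
        rw [← hy]
        exact hmax _ hxR.2 hxR.1

lemma rcStep_mem_true {R : Finset (ℕ×ℕ)} {i j : ℕ} (h : (i, j) ∈ R) :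
    rcStep R (i, j, true) = (i, j+1, true) := by simp [rcStep, h]

lemma rcStep_mem_false {R : Finset (ℕ×ℕ)} {i j : ℕ} (h : (i, j) ∈ R) :
    rcStep R (i, j, false) = (i-1, j, false) := by simp [rcStep, h]

lemma rcStep_not_mem_true {R : Finset (ℕ×ℕ)} {i j : ℕ} (h : (i, j) ∉ R) :
    rcStep R (i, j, true) = (i-1, j, false) := by simp [rcStep, h]

lemma rcStep_not_mem_false {R : Finset (ℕ×ℕ)} {i j : ℕ} (h : (i, j) ∉ R) :
    rcStep R (i, j, false) = (i, j+1, true) := by simp [rcStep, h]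

lemma step_congr {R R' : Finset (ℕ×ℕ)} {u : ℕ×ℕ×Bool}
    (h : ((u.1, u.2.1) ∈ R) ↔ ((u.1, u.2.1) ∈ R')) : rcStep R u = rcStep R' u := by
  unfold rcStep
  rw [decide_eq_decide.mpr h]

lemma rcStep_j_le (R : Finset (ℕ×ℕ)) (s : ℕ×ℕ×Bool) : s.2.1 ≤ (rcStep R s).2.1 := by
  unfold rcStep; split <;> simp

lemma rcStep_i_ge (R : Finset (ℕ×ℕ)) (s : ℕ×ℕ×Bool) : (rcStep R s).1 ≤ s.1 := by
  unfold rcStep; split <;> simp <;> omega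

lemma iter_j_le (R : Finset (ℕ×ℕ)) (s : ℕ×ℕ×Bool) (t : ℕ) :
    s.2.1 ≤ ((rcStep R)^[t] s).2.1 := by
  induction t with
  | zero => simp
  | succ t ih => rw [Function.iterate_succ_apply']; exact le_trans ih (rcStep_j_le R _)

lemma iter_i_ge (R : Finset (ℕ×ℕ)) (s : ℕ×ℕ×Bool) (t : ℕ) :
    ((rcStep R)^[t] s).1 ≤ s.1 := by
  induction t with
  | zero => simp
  | succ t ih => rw [Function.iterate_succ_apply']; exact le_trans (rcStep_i_ge R _) ih

lemma iter_j_mono (R : Finset (ℕ×ℕ)) (s : ℕ×ℕ×Bool) {m M : ℕ} (h : m ≤ M) :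
    ((rcStep R)^[m] s).2.1 ≤ ((rcStep R)^[M] s).2.1 := by
  obtain ⟨t, rfl⟩ := Nat.exists_eq_add_of_le h
  rw [Nat.add_comm, Function.iterate_add_apply]
  exact iter_j_le R _ t

lemma iter_i_mono (R : Finset (ℕ×ℕ)) (s : ℕ×ℕ×Bool) {m M : ℕ} (h : m ≤ M) :
    ((rcStep R)^[M] s).1 ≤ ((rcStep R)^[m] s).1 := by
  obtain ⟨t, rfl⟩ := Nat.exists_eq_add_of_le h
  rw [Nat.add_comm, Function.iterate_add_apply]
  exact iter_i_ge R _ t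

lemma path_j_ge_one (R : Finset (ℕ×ℕ)) (k m : ℕ) :
    1 ≤ ((rcStep R)^[m] (k, 1, true)).2.1 :=
  iter_j_le R (k, 1, true) m

lemma pred_true {R : Finset (ℕ×ℕ)} {p : ℕ×ℕ×Bool} {u1 u2 : ℕ}
    (h : rcStep R p = (u1, u2, true)) :
    1 ≤ u2 ∧ p = (u1, u2 - 1, decide ((u1, u2 - 1) ∈ R)) := by
  rcases p with ⟨p1, p2, p3⟩
  unfold rcStep at h
  split at h
  · rename_i hc
    simp only [Prod.mk.injEq] at h
    obtain ⟨e1, e2, -⟩ := h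
    simp only at hc
    subst e1
    have hp2 : p2 = u2 - 1 := by omega
    subst hp2
    exact ⟨by omega, by rw [← hc]⟩
  · simp only [Prod.mk.injEq] at h
    exact absurd h.2.2 (by simp)

lemma pred_false {R : Finset (ℕ×ℕ)} {p : ℕ×ℕ×Bool} {u1 u2 : ℕ}
    (h : rcStep R p = (u1, u2, false)) (hu : 1 ≤ u1) :
    p = (u1 + 1, u2, !decide ((u1 + 1, u2) ∈ R)) := by
  rcases p with ⟨p1, p2, p3⟩
  unfold rcStep at h
  split at h
  · simp only [Prod.mk.injEq] at h
    exact absurd h.2.2 (by simp)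
  · rename_i hc
    simp only [Prod.mk.injEq] at h
    obtain ⟨e1, e2, -⟩ := h
    simp only at hc
    have hp1 : p1 = u1 + 1 := by omega
    subst hp1
    have hp3 : p3 = !decide ((u1 + 1, p2) ∈ R) := by
      cases p3 <;> cases hdec : decide ((u1 + 1, p2) ∈ R) <;> simp_all
    rw [hp3, e2]

lemma rcStep_inj {R : Finset (ℕ×ℕ)} {p p' u : ℕ×ℕ×Bool}
    (h : rcStep R p = u) (h' : rcStep R p' = u) (hu : 1 ≤ u.1) :
    p = p' ∧ u.1 ≤ p.1 := by
  rcases u with ⟨u1, u2, u3⟩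
  simp only at hu
  cases u3
  · have k1 := pred_false h hu
    have k2 := pred_false h' hu
    refine ⟨k1.trans k2.symm, ?_⟩
    rw [k1]
    show u1 ≤ u1 + 1
    omega
  · have k1 := (pred_true h).2
    have k2 := (pred_true h').2
    refine ⟨k1.trans k2.symm, ?_⟩
    rw [k1]

lemma no_pred (R : Finset (ℕ×ℕ)) (k k' m : ℕ) :
    rcStep R ((rcStep R)^[m] (k', 1, true)) ≠ (k, 1, true) := by
  intro hc
  have hj : 1 ≤ ((rcStep R)^[m] (k', 1, true)).2.1 := path_j_ge_one R k' m
  have := (pred_true hc).2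
  rw [this] at hj
  simp at hj

lemma unique_strand (R : Finset (ℕ×ℕ)) :
    ∀ {m m' k k' : ℕ} {u : ℕ×ℕ×Bool},
      (rcStep R)^[m] (k, 1, true) = u → (rcStep R)^[m'] (k', 1, true) = u → 1 ≤ u.1 →
      k = k' ∧ m = m' := by
  intro m
  induction m with
  | zero =>
    intro m' k k' u h h' hu
    simp only [Function.iterate_zero_apply] at h
    rcases m' with _ | t
    · simp only [Function.iterate_zero_apply] at h'
      rw [← h] at h'
      exact ⟨(Prod.ext_iff.mp h').1.symm, rfl⟩
    · exfalso
      rw [Function.iterate_succ_apply'] at h'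
      rw [← h] at h'
      exact no_pred R k k' t h'
  | succ m ih =>
    intro m' k k' u h h' hu
    rcases m' with _ | t
    · exfalso
      simp only [Function.iterate_zero_apply] at h'
      rw [Function.iterate_succ_apply'] at h
      rw [← h'] at h
      exact no_pred R k' k m h
    · rw [Function.iterate_succ_apply'] at h h'
      have hinj := rcStep_inj h h' hu
      have hrec := ih (m' := t) (k := k) (k' := k') rfl
        (by rw [← hinj.1]) (le_trans hu (by exact hinj.2))
      exact ⟨hrec.1, by omega⟩

lemma diag (S : Finset (ℕ×ℕ)) : ∀ (c i0 : ℕ),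
    (∀ i j, i + j = i0 + c + 1 → i0 < i → (i, j) ∉ S) →
    (∀ i j, i + j = i0 + c → i0 ≤ i → 1 ≤ j → (i, j) ∉ S) →
    (rcStep S)^[2*c] (i0 + c, 1, true) = (i0, c + 1, true) := by
  intro c
  induction c with
  | zero => intro i0 _ _; simp
  | succ c ih =>
    intro i0 h1 h2
    have key := ih (i0 + 1) (fun i j hij hi => h1 i j (by omega) (by omega))
      (fun i j hij hi hj => h2 i j (by omega) (by omega) hj)
    have s1 : rcStep S (i0 + 1, c + 1, true) = (i0, c + 1, false) := by
      have hns : (i0 + 1, c + 1) ∉ S := h1 _ _ (by omega) (by omega)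
      rw [rcStep_not_mem_true hns]
      simp
    have s2 : rcStep S (i0, c + 1, false) = (i0, c + 2, true) := by
      have hns : (i0, c + 1) ∉ S := h2 _ _ (by omega) (by omega) (by omega)
      rw [rcStep_not_mem_false hns]
    have e2 : 2 * (c + 1) = (2 * c) + 1 + 1 := by ring
    rw [e2, Function.iterate_succ_apply', Function.iterate_succ_apply']
    have estart : i0 + (c + 1) = i0 + 1 + c := by ring
    rw [estart, key, s1, s2]

lemma eqfut {R : Finset (ℕ×ℕ)} {p0 : ℕ×ℕ} :
    ∀ (t : ℕ) (u : ℕ×ℕ×Bool), (p0.2 < u.2.1 ∨ u.1 < p0.1) →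
      (rcStep R)^[t] u = (rcStep (R.erase p0))^[t] u := by
  intro t
  induction t with
  | zero => intros; rfl
  | succ t ih =>
    intro u hu
    rw [Function.iterate_succ_apply, Function.iterate_succ_apply]
    have hcell : (u.1, u.2.1) ≠ p0 := by
      rcases p0 with ⟨a, b⟩
      intro hc
      simp only [Prod.mk.injEq] at hc
      simp only at hu
      omega
    have hmem : ((u.1, u.2.1) ∈ R) ↔ ((u.1, u.2.1) ∈ R.erase p0) := by
      rw [Finset.mem_erase]; exact ⟨fun h => ⟨hcell, h⟩, fun h => h.2⟩
    rw [← step_congr hmem]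
    apply ih
    rcases hu with h | h
    · left; exact lt_of_lt_of_le h (rcStep_j_le R u)
    · right; exact lt_of_le_of_lt (rcStep_i_ge R u) h

theorem main_traverse (R : Finset (ℕ×ℕ)) :
    ∀ (_ : ∀ p ∈ R, 1 ≤ p.1 ∧ 1 ≤ p.2) (w : Equiv.Perm ℕ) (L : List (ℕ×ℕ)),
      IsRCReading R L → IsReducedWordFor w (rcWord L) →
      ∀ k, ((∃ i j, TraversesH R k i j) ↔ ∃ k', k < k' ∧ w k' < w k) ∧
           ((∃ i j, TraversesV R k i j) ↔ ∃ k', k' < k ∧ w k < w k') := by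
  induction R using Finset.strongInductionOn with
  | _ R ih =>
  intro hpos w L hL hred k
  rcases R.eq_empty_or_nonempty with rfl | hne
  · -- base case
    have hLnil : L = [] := by
      rw [← List.toFinset_eq_empty_iff]; exact hL.1
    subst hLnil
    have hw : w = 1 := by rw [← hred.2.1]; rfl
    subst hw
    constructor
    · constructor
      · rintro ⟨i, j, hij, -⟩; exact absurd hij (Finset.notMem_empty _)
      · rintro ⟨k', h1, h2⟩; simp only [Equiv.Perm.one_apply] at h2; omega
    · constructor
      · rintro ⟨i, j, hij, -⟩; exact absurd hij (Finset.notMem_empty _)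
      · rintro ⟨k', h1, h2⟩; simp only [Equiv.Perm.one_apply] at h2; omega
  -- inductive case
  obtain ⟨L', p0, rfl, hp0R, hmaxx, hL'⟩ := reading_decomp hL hne
  rcases p0 with ⟨i0, j0⟩
  obtain ⟨hi0, hj0⟩ := hpos _ hp0R
  obtain ⟨c, rfl⟩ : ∃ c, j0 = c + 1 := ⟨j0 - 1, by omega⟩
  obtain ⟨d, rfl⟩ : ∃ d, i0 = d + 1 := ⟨i0 - 1, by omega⟩
  -- the word decomposition
  have hrw : rcWord (L' ++ [(d+1, c+1)]) = rcWord L' ++ [d + 1 + c] := by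
    unfold rcWord
    rw [List.map_append]
    simp only [List.map_cons, List.map_nil]
    have : ((d+1, c+1) : ℕ × ℕ).1 + ((d+1, c+1) : ℕ × ℕ).2 - 1 = d + 1 + c := by simp
    rw [this]
  rw [hrw] at hred
  have hC : wordProd (rcWord L') (d+1+c) < wordProd (rcWord L') (d+1+c+1) :=
    descent_of_reduced hred
  set w' := wordProd (rcWord L') with hw'def
  have hweq : w = w' * sTrans (d+1+c) := by
    rw [← hred.2.1, wordProd_concat]
  have hwx : ∀ x, w x = w' (sTrans (d+1+c) x) := fun x => by
    rw [hweq]; rfl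
  -- reducedness of the prefix
  have hred' : IsReducedWordFor w' (rcWord L') := by
    refine ⟨fun b hb => hred.1 b (List.mem_append_left _ hb), rfl, ?_⟩
    intro M hM1 hM2
    have h3 : wordProd (M ++ [d+1+c]) = w := by
      rw [wordProd_concat, hM2, ← hweq]
    have h4 := hred.2.2 (M ++ [d+1+c]) ?_ h3
    · simp only [List.length_append, List.length_singleton] at h4
      omega
    · intro b hb
      rcases List.mem_append.mp hb with h | h
      · exact hM1 b h
      · simp at h; omega
  -- structure facts about R
  have hrow : ∀ i j, (i, j) ∈ R → i ≤ d + 1 ∧ (i = d + 1 → c + 1 ≤ j) := by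
    intro i j hij
    by_cases hp : (i, j) = (d+1, c+1)
    · simp only [Prod.mk.injEq] at hp; omega
    · have := hmaxx _ hij hp
      unfold rcLT at this
      simp only at this
      omega
  have hpos' : ∀ p ∈ R.erase (d+1, c+1), 1 ≤ p.1 ∧ 1 ≤ p.2 :=
    fun p hp => hpos p (Finset.mem_of_mem_erase hp)
  have IH := ih (R.erase (d+1, c+1)) (Finset.erase_ssubset hp0R) hpos' w' L' hL' hred'
  have hp0R' : (d+1, c+1) ∉ R.erase (d+1, c+1) := Finset.notMem_erase _ _
  -- diagonal prefixes
  have dRa : (rcStep R)^[2*c] (d+1+c, 1, true) = (d+1, c+1, true) := by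
    apply diag R c (d+1)
    · intro i j hij hi hmem
      have := hrow i j hmem; omega
    · intro i j hij hi hj hmem
      have := hrow i j hmem; omega
  have dR'a : (rcStep (R.erase (d+1,c+1)))^[2*c] (d+1+c, 1, true) = (d+1, c+1, true) := by
    apply diag _ c (d+1)
    · intro i j hij hi hmem
      have := hrow i j (Finset.mem_of_mem_erase hmem); omega
    · intro i j hij hi hj hmem
      have := hrow i j (Finset.mem_of_mem_erase hmem); omega
  have dRb0 : (rcStep R)^[2*c] (d+1+c+1, 1, true) = (d+2, c+1, true) := by
    have := diag R c (d+2) ?_ ?_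
    · rw [show d+2+c = d+1+c+1 from by ring] at this
      exact this
    · intro i j hij hi hmem
      have := hrow i j hmem; omega
    · intro i j hij hi hj hmem
      have := hrow i j hmem; omega
  have dR'b0 : (rcStep (R.erase (d+1,c+1)))^[2*c] (d+1+c+1, 1, true) = (d+2, c+1, true) := by
    have := diag (R.erase (d+1,c+1)) c (d+2) ?_ ?_
    · rw [show d+2+c = d+1+c+1 from by ring] at this
      exact this
    · intro i j hij hi hmem
      have := hrow i j (Finset.mem_of_mem_erase hmem); omega
    · intro i j hij hi hj hmem
      have := hrow i j (Finset.mem_of_mem_erase hmem); omega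
  have hd2 : (d+2, c+1) ∉ R := fun hmem => by have := hrow _ _ hmem; omega
  have hd2' : (d+2, c+1) ∉ R.erase (d+1,c+1) := fun hmem => hd2 (Finset.mem_of_mem_erase hmem)
  have dRb1 : (rcStep R)^[2*c+1] (d+1+c+1, 1, true) = (d+1, c+1, false) := by
    rw [Function.iterate_succ_apply', dRb0, rcStep_not_mem_true hd2]
    simp
  have dR'b1 : (rcStep (R.erase (d+1,c+1)))^[2*c+1] (d+1+c+1, 1, true) = (d+1, c+1, false) := by
    rw [Function.iterate_succ_apply', dR'b0, rcStep_not_mem_true hd2']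
    simp
  -- the four one-step continuations
  have tRa : (rcStep R)^[2*c+1] (d+1+c, 1, true) = (d+1, c+2, true) := by
    rw [Function.iterate_succ_apply', dRa, rcStep_mem_true hp0R]
  have tR'a : (rcStep (R.erase (d+1,c+1)))^[2*c+1] (d+1+c, 1, true) = (d, c+1, false) := by
    rw [Function.iterate_succ_apply', dR'a, rcStep_not_mem_true hp0R']
    simp
  have tRb : (rcStep R)^[2*c+2] (d+1+c+1, 1, true) = (d, c+1, false) := by
    rw [show 2*c+2 = (2*c+1)+1 from rfl, Function.iterate_succ_apply', dRb1,
      rcStep_mem_false hp0R]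
    simp
  have tR'b : (rcStep (R.erase (d+1,c+1)))^[2*c+2] (d+1+c+1, 1, true) = (d+1, c+2, true) := by
    rw [show 2*c+2 = (2*c+1)+1 from rfl, Function.iterate_succ_apply', dR'b1,
      rcStep_not_mem_false hp0R']
  -- tails agree
  have EQ1 : ∀ t, (rcStep R)^[t] (d+1, c+2, true) =
      (rcStep (R.erase (d+1,c+1)))^[t] (d+1, c+2, true) := by
    intro t
    apply eqfut
    left; simp
  have EQ2 : ∀ t, (rcStep R)^[t] (d, c+1, false) =
      (rcStep (R.erase (d+1,c+1)))^[t] (d, c+1, false) := by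
    intro t
    apply eqfut
    right; simp
  have T1 : ∀ t, (rcStep R)^[t + (2*c+1)] (d+1+c, 1, true) =
      (rcStep (R.erase (d+1,c+1)))^[t + (2*c+2)] (d+1+c+1, 1, true) := by
    intro t
    rw [Function.iterate_add_apply _ t (2*c+1), Function.iterate_add_apply _ t (2*c+2), tRa, tR'b, EQ1]
  have T2 : ∀ t, (rcStep R)^[t + (2*c+2)] (d+1+c+1, 1, true) =
      (rcStep (R.erase (d+1,c+1)))^[t + (2*c+1)] (d+1+c, 1, true) := by
    intro t
    rw [Function.iterate_add_apply _ t (2*c+2), Function.iterate_add_apply _ t (2*c+1), tRb, tR'a, EQ2]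
  -- path equality for other strands
  have PEQ : k ≠ d+1+c → k ≠ d+1+c+1 → ∀ (m : ℕ),
      (rcStep R)^[m] (k,1,true) = (rcStep (R.erase (d+1,c+1)))^[m] (k,1,true) := by
    intro hka hkb m
    induction m with
    | zero => rfl
    | succ m ihm =>
      rw [Function.iterate_succ_apply', Function.iterate_succ_apply', ihm]
      have key : ∀ u : ℕ×ℕ×Bool, (rcStep (R.erase (d+1,c+1)))^[m] (k,1,true) = u →
          rcStep R u = rcStep (R.erase (d+1,c+1)) u := by
        rintro ⟨u1, u2, u3⟩ hu
        by_cases hcell : (u1, u2) = (d+1, c+1)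
        · exfalso
          simp only [Prod.mk.injEq] at hcell
          obtain ⟨rfl, rfl⟩ := hcell
          cases u3
          · exact hkb (unique_strand _ hu dR'b1 (by omega)).1
          · exact hka (unique_strand _ hu dR'a (by omega)).1
        · apply step_congr
          show ((u1, u2) ∈ R) ↔ ((u1, u2) ∈ R.erase (d+1,c+1))
          rw [Finset.mem_erase]
          exact ⟨fun h => ⟨hcell, h⟩, fun h => h.2⟩
      exact key _ rfl
  -- H and V traversal transfer for other strands
  have HK : k ≠ d+1+c → k ≠ d+1+c+1 →
      ((∃ i j, TraversesH R k i j) ↔ (∃ i j, TraversesH (R.erase (d+1,c+1)) k i j)) := by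
    intro hka hkb
    constructor
    · rintro ⟨i, j, hij, m, hm⟩
      have hne' : (i, j) ≠ (d+1, c+1) := by
        intro hc
        simp only [Prod.mk.injEq] at hc
        obtain ⟨rfl, rfl⟩ := hc
        exact hka (unique_strand R hm dRa (by omega)).1
      exact ⟨i, j, Finset.mem_erase.mpr ⟨hne', hij⟩, m, by rw [← PEQ hka hkb m]; exact hm⟩
    · rintro ⟨i, j, hij, m, hm⟩
      exact ⟨i, j, Finset.mem_of_mem_erase hij, m, by rw [PEQ hka hkb m]; exact hm⟩
  have VK : k ≠ d+1+c → k ≠ d+1+c+1 →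
      ((∃ i j, TraversesV R k i j) ↔ (∃ i j, TraversesV (R.erase (d+1,c+1)) k i j)) := by
    intro hka hkb
    constructor
    · rintro ⟨i, j, hij, m, hm⟩
      have hne' : (i, j) ≠ (d+1, c+1) := by
        intro hc
        simp only [Prod.mk.injEq] at hc
        obtain ⟨rfl, rfl⟩ := hc
        exact hkb (unique_strand R hm dRb1 (by omega)).1
      exact ⟨i, j, Finset.mem_erase.mpr ⟨hne', hij⟩, m, by rw [← PEQ hka hkb m]; exact hm⟩
    · rintro ⟨i, j, hij, m, hm⟩
      exact ⟨i, j, Finset.mem_of_mem_erase hij, m, by rw [PEQ hka hkb m]; exact hm⟩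
  -- V-traversals of the strand d+1+c
  have E3 : (∃ i j, TraversesV R (d+1+c) i j) ↔
      (∃ i j, TraversesV (R.erase (d+1,c+1)) (d+1+c+1) i j) := by
    constructor
    · rintro ⟨i, j, hij, m, hm⟩
      have hmge : 2*c+1 ≤ m := by
        by_contra hlt
        push_neg at hlt
        have hmle : m ≤ 2*c := by omega
        have hjle : j ≤ c+1 := by
          have h := iter_j_mono R (d+1+c,1,true) hmle
          rw [hm, dRa] at h
          simpa using h
        have hige : d+1 ≤ i := by
          have h := iter_i_mono R (d+1+c,1,true) hmle
          rw [hm, dRa] at h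
          simpa using h
        have hr := hrow i j hij
        have hie : i = d+1 := by omega
        have hje : j = c+1 := by omega
        subst hie; subst hje
        have hmne : m ≠ 2*c := by
          intro hc
          rw [hc, dRa] at hm
          simp at hm
        have hm1 : m + 1 ≤ 2*c := by omega
        have hstep : (rcStep R)^[m+1] (d+1+c,1,true) = (d, c+1, false) := by
          rw [Function.iterate_succ_apply', hm, rcStep_mem_false hij]
          simp
        have h := iter_i_mono R (d+1+c,1,true) hm1
        rw [hstep, dRa] at h
        simp at h
      obtain ⟨t, rfl⟩ : ∃ t, m = t + (2*c+1) := ⟨m - (2*c+1), by omega⟩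
      have hm' : (rcStep (R.erase (d+1,c+1)))^[t + (2*c+2)] (d+1+c+1, 1, true) = (i,j,false) := by
        rw [← T1]; exact hm
      have hjge : c+2 ≤ j := by
        have h := iter_j_mono R (d+1+c,1,true) (Nat.le_add_left (2*c+1) t)
        rw [hm, tRa] at h
        simpa using h
      have hne2 : (i, j) ≠ (d+1, c+1) := by
        intro hc; simp only [Prod.mk.injEq] at hc; omega
      exact ⟨i, j, Finset.mem_erase.mpr ⟨hne2, hij⟩, t + (2*c+2), hm'⟩
    · rintro ⟨i, j, hij, m, hm⟩
      have hmge : 2*c+2 ≤ m := by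
        by_contra hlt
        push_neg at hlt
        have hmle : m ≤ 2*c+1 := by omega
        have hjle : j ≤ c+1 := by
          have h := iter_j_mono (R.erase (d+1,c+1)) (d+1+c+1,1,true) hmle
          rw [hm, dR'b1] at h
          simpa using h
        have hige : d+1 ≤ i := by
          have h := iter_i_mono (R.erase (d+1,c+1)) (d+1+c+1,1,true) hmle
          rw [hm, dR'b1] at h
          simpa using h
        have hr := hrow i j (Finset.mem_of_mem_erase hij)
        have hne2 := (Finset.mem_erase.mp hij).1
        have hie : i = d+1 := by omega
        have hje : j = c+1 := by omega
        exact hne2 (by rw [hie, hje])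
      obtain ⟨t, rfl⟩ : ∃ t, m = t + (2*c+2) := ⟨m - (2*c+2), by omega⟩
      exact ⟨i, j, Finset.mem_of_mem_erase hij, t + (2*c+1), by rw [T1]; exact hm⟩
  -- H-traversals of the strand d+1+c+1
  have E4 : (∃ i j, TraversesH R (d+1+c+1) i j) ↔
      (∃ i j, TraversesH (R.erase (d+1,c+1)) (d+1+c) i j) := by
    constructor
    · rintro ⟨i, j, hij, m, hm⟩
      have hmge : 2*c+2 ≤ m := by
        by_contra hlt
        push_neg at hlt
        have hmle : m ≤ 2*c+1 := by omega
        have hjle : j ≤ c+1 := by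
          have h := iter_j_mono R (d+1+c+1,1,true) hmle
          rw [hm, dRb1] at h
          simpa using h
        have hige : d+1 ≤ i := by
          have h := iter_i_mono R (d+1+c+1,1,true) hmle
          rw [hm, dRb1] at h
          simpa using h
        have hr := hrow i j hij
        have hie : i = d+1 := by omega
        have hje : j = c+1 := by omega
        subst hie; subst hje
        have hmne : m ≠ 2*c+1 := by
          intro hc
          rw [hc, dRb1] at hm
          simp at hm
        have hm1 : m + 1 ≤ 2*c+1 := by omega
        have hstep : (rcStep R)^[m+1] (d+1+c+1,1,true) = (d+1, c+2, true) := by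
          rw [Function.iterate_succ_apply', hm, rcStep_mem_true hij]
        have h := iter_j_mono R (d+1+c+1,1,true) hm1
        rw [hstep, dRb1] at h
        simp at h
      obtain ⟨t, rfl⟩ : ∃ t, m = t + (2*c+2) := ⟨m - (2*c+2), by omega⟩
      have hm' : (rcStep (R.erase (d+1,c+1)))^[t + (2*c+1)] (d+1+c, 1, true) = (i,j,true) := by
        rw [← T2]; exact hm
      have hile : i ≤ d := by
        have h := iter_i_mono R (d+1+c+1,1,true) (Nat.le_add_left (2*c+2) t)
        rw [hm, tRb] at h
        simpa using h
      have hne2 : (i, j) ≠ (d+1, c+1) := by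
        intro hc; simp only [Prod.mk.injEq] at hc; omega
      exact ⟨i, j, Finset.mem_erase.mpr ⟨hne2, hij⟩, t + (2*c+1), hm'⟩
    · rintro ⟨i, j, hij, m, hm⟩
      have hmge : 2*c+1 ≤ m := by
        by_contra hlt
        push_neg at hlt
        have hmle : m ≤ 2*c := by omega
        have hjle : j ≤ c+1 := by
          have h := iter_j_mono (R.erase (d+1,c+1)) (d+1+c,1,true) hmle
          rw [hm, dR'a] at h
          simpa using h
        have hige : d+1 ≤ i := by
          have h := iter_i_mono (R.erase (d+1,c+1)) (d+1+c,1,true) hmle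
          rw [hm, dR'a] at h
          simpa using h
        have hr := hrow i j (Finset.mem_of_mem_erase hij)
        have hne2 := (Finset.mem_erase.mp hij).1
        have hie : i = d+1 := by omega
        have hje : j = c+1 := by omega
        exact hne2 (by rw [hie, hje])
      obtain ⟨t, rfl⟩ : ∃ t, m = t + (2*c+1) := ⟨m - (2*c+1), by omega⟩
      exact ⟨i, j, Finset.mem_of_mem_erase hij, t + (2*c+2), by rw [T2]; exact hm⟩
  -- the forced truths
  have HA : ∃ i j, TraversesH R (d+1+c) i j := ⟨d+1, c+1, hp0R, 2*c, dRa⟩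
  have VB : ∃ i j, TraversesV R (d+1+c+1) i j := ⟨d+1, c+1, hp0R, 2*c+1, dRb1⟩
  have hineq : w (d+1+c+1) < w (d+1+c) := by
    rw [hwx (d+1+c+1), hwx (d+1+c), sTrans_right, sTrans_left]
    exact hC
  have RHA : ∃ k', d+1+c < k' ∧ w k' < w (d+1+c) := ⟨d+1+c+1, by omega, hineq⟩
  have RVB : ∃ k', k' < d+1+c+1 ∧ w (d+1+c+1) < w k' := ⟨d+1+c, by omega, hineq⟩
  -- case analysis on k
  by_cases hk1 : k = d + 1 + c
  · subst hk1
    refine ⟨⟨fun _ => RHA, fun _ => HA⟩, ?_⟩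
    refine E3.trans (((IH (d+1+c+1)).2).trans ?_)
    constructor
    · rintro ⟨k', h1, h2⟩
      have hk'ne : k' ≠ d+1+c := by
        intro hc
        rw [hc] at h2
        omega
      refine ⟨k', by omega, ?_⟩
      rw [hwx (d+1+c), sTrans_left, hwx k', sTrans_other (by omega) (by omega)]
      exact h2
    · rintro ⟨k', h1, h2⟩
      rw [hwx (d+1+c), sTrans_left, hwx k', sTrans_other (by omega) (by omega)] at h2
      exact ⟨k', by omega, h2⟩
  by_cases hk2 : k = d + 1 + c + 1
  · subst hk2
    refine ⟨?_, ⟨fun _ => RVB, fun _ => VB⟩⟩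
    refine E4.trans (((IH (d+1+c)).1).trans ?_)
    constructor
    · rintro ⟨k', h1, h2⟩
      have hk'ne : k' ≠ d+1+c+1 := by
        intro hc
        rw [hc] at h2
        omega
      refine ⟨k', by omega, ?_⟩
      rw [hwx (d+1+c+1), sTrans_right, hwx k', sTrans_other (by omega) (by omega)]
      exact h2
    · rintro ⟨k', h1, h2⟩
      rw [hwx (d+1+c+1), sTrans_right, hwx k', sTrans_other (by omega) (by omega)] at h2
      exact ⟨k', by omega, h2⟩
  · -- generic strand
    constructor
    · refine (HK hk1 hk2).trans (((IH k).1).trans ?_)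
      constructor
      · rintro ⟨k', h1, h2⟩
        refine ⟨sTrans (d+1+c) k', ?_, ?_⟩
        · rw [sTrans_apply]; split_ifs <;> omega
        · rw [hwx (sTrans (d+1+c) k'), sTrans_invol, hwx k, sTrans_other hk1 hk2]
          exact h2
      · rintro ⟨k', h1, h2⟩
        refine ⟨sTrans (d+1+c) k', ?_, ?_⟩
        · rw [sTrans_apply]; split_ifs <;> omega
        · rw [hwx k', hwx k, sTrans_other hk1 hk2] at h2
          exact h2
    · refine (VK hk1 hk2).trans (((IH k).2).trans ?_)
      constructor
      · rintro ⟨k', h1, h2⟩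
        refine ⟨sTrans (d+1+c) k', ?_, ?_⟩
        · rw [sTrans_apply]; split_ifs <;> omega
        · rw [hwx (sTrans (d+1+c) k'), sTrans_invol, hwx k, sTrans_other hk1 hk2]
          exact h2
      · rintro ⟨k', h1, h2⟩
        refine ⟨sTrans (d+1+c) k', ?_, ?_⟩
        · rw [sTrans_apply]; split_ifs <;> omega
        · rw [hwx k', hwx k, sTrans_other hk1 hk2] at h2
          exact h2


/-- If `w` is 321-avoiding, no line of any rc-graph for `w` contains both a cross traversed
horizontally and a cross traversed vertically; conversely, if `w` contains the pattern
321, every rc-graph for `w` has such a line. -/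
theorem stmt12 (n : ℕ) (w : Equiv.Perm ℕ) (hw : IsPermOn n w) :
    (¬ Has321 w → ∀ R, IsRCGraph n w R → ∀ k,
      ¬ ((∃ i j, TraversesH R k i j) ∧ (∃ i j, TraversesV R k i j))) ∧
    (Has321 w → ∀ R, IsRCGraph n w R → ∃ k, 1 ≤ k ∧ k ≤ n ∧
      (∃ i j, TraversesH R k i j) ∧ (∃ i j, TraversesV R k i j)) := by
  constructor
  · intro h321 R hR k hk
    obtain ⟨hHs, hVs⟩ := hk
    obtain ⟨L, hL⟩ := reading_exists R
    have hred := hR.2 L hL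
    have hpos : ∀ p ∈ R, 1 ≤ p.1 ∧ 1 ≤ p.2 := fun p hp => ⟨(hR.1 p hp).1, (hR.1 p hp).2.1⟩
    have main := main_traverse R hpos w L hL hred k
    obtain ⟨k2, hk2, hw2⟩ := (main.1).mp hHs
    obtain ⟨k1, hk1, hw1⟩ := (main.2).mp hVs
    apply h321
    refine ⟨k1, k, k2, ?_, hk1, hk2, hw2, hw1⟩
    by_contra h0
    push_neg at h0
    have hk10 : k1 = 0 := by omega
    subst hk10
    have hw0 : w 0 = 0 := by
      by_contra hc
      have := hw 0 hc
      omega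
    rw [hw0] at hw1
    omega
  · intro h321 R hR
    obtain ⟨i, j, kk, h1, h2, h3, h4, h5⟩ := h321
    obtain ⟨L, hL⟩ := reading_exists R
    have hred := hR.2 L hL
    have hpos : ∀ p ∈ R, 1 ≤ p.1 ∧ 1 ≤ p.2 := fun p hp => ⟨(hR.1 p hp).1, (hR.1 p hp).2.1⟩
    have main := main_traverse R hpos w L hL hred j
    refine ⟨j, by omega, ?_, ?_, ?_⟩
    · by_contra hc
      push_neg at hc
      have hwj : w j = j := by
        by_contra hc2; have := hw j hc2; omega
      have hwk : w kk = kk := by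
        by_contra hc2; have := hw kk hc2; omega
      omega
    · exact (main.1).mpr ⟨kk, h3, h4⟩
    · exact (main.2).mpr ⟨i, h2, h5⟩
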